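/- Let V ⊆ C(S¹, ℝ) be a (2d+1)-dimensional Chebyshev space (containing constants, and such that every non-constant f ∈ V attains each value at most 2d times). Then there is a closed arc I ⊆ S¹ of length d/(d+1) such that every f ∈ V with zero mean has a zero on I. -/

import Mathlib

/-!
The integral is a nonnegative functional on `V`, so in the dual coordinates of `V` it lies in the
closed convex cone spanned by the point evaluations. Push it along one evaluation to
the boundary of that cone and take a supporting hyperplane there: it is a nonnegative `g ∈ V`
vanishing at all remaining nodes. Every zero of a nonnegative function is a local minimum, so a
small positive level of `g` is attained twice near each zero; the Chebyshev bound `2d` on level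
sets therefore leaves at most `d` zeros, and `V` has a positive quadrature formula with at most
`d + 1` nodes. Any `d + 1` points of the circle lie on a closed arc of length `d / (d + 1)`, and a
zero-mean `f ∈ V` is `≤ 0` at one node and `≥ 0` at another, so it vanishes on that arc.
-/

open Set Filter Topology Finsupp PointedCone
open scoped NNReal

section ConicHull

variable {E : Type*} [NormedAddCommGroup E] [NormedSpace ℝ E]

theorem IsCompact.convexHull [FiniteDimensional ℝ E] {K : Set E} (hK : IsCompact K) :
    IsCompact (convexHull ℝ K) := by
  set n := Module.finrank ℝ E
  let Φ : (Fin (n + 1) → ℝ) × (Fin (n + 1) → E) → E := fun p => ∑ i, p.1 i • p.2 i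
  have hΦ : Continuous Φ := by fun_prop
  -- Carathéodory: convex combinations of `n + 1` points of `K` (some weights zero) suffice.
  suffices _root_.convexHull ℝ K = Φ '' (stdSimplex ℝ (Fin (n + 1)) ×ˢ univ.pi fun _ => K) by
    rw [this]
    exact ((isCompact_stdSimplex ℝ _).prod (isCompact_univ_pi fun _ => hK)).image hΦ
  refine Subset.antisymm (fun x hx => ?_) ?_
  · obtain ⟨ι, _, z, w, hzK, hz, hw, hw1, rfl⟩ := eq_pos_convex_span_of_mem_convexHull hx
    have hcard : Fintype.card ι ≤ n + 1 :=
      hz.card_le_finrank_succ.trans (Nat.succ_le_succ (Submodule.finrank_le _))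
    let e : ι ↪ Fin (n + 1) := (Fintype.equivFin ι).toEmbedding.trans (Fin.castLEEmb hcard)
    obtain ⟨i₀⟩ : Nonempty ι := by
      by_contra h
      simp [not_nonempty_iff.1 h] at hw1
    set w' := Function.extend e w 0
    set z' := Function.extend e z fun _ => z i₀
    have hw'e (i : ι) : w' (e i) = w i := e.injective.extend_apply _ _ i
    have hz'e (i : ι) : z' (e i) = z i := e.injective.extend_apply _ _ i
    have hw'0 (j) (hj : j ∉ range e) : w' j = 0 := Function.extend_apply' _ _ _ (by simpa using hj)
    refine ⟨(w', z'), ⟨⟨fun j => ?_, ?_⟩, fun j _ => ?_⟩, ?_⟩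
    · by_cases hj : j ∈ range e
      · obtain ⟨i, rfl⟩ := hj
        exact (hw'e i).ge.trans' (hw i).le
      · exact (hw'0 j hj).ge
    · rw [← hw1]
      exact (Fintype.sum_of_injective e e.injective w w' hw'0 fun i => (hw'e i).symm).symm
    · by_cases hj : j ∈ range e
      · obtain ⟨i, rfl⟩ := hj
        show z' (e i) ∈ K
        exact (hz'e i).symm ▸ hzK ⟨i, rfl⟩
      · simpa [z', Function.extend_apply' _ _ _ (by simpa using hj : ¬∃ i, e i = j)]
          using hzK ⟨i₀, rfl⟩
    · refine (Fintype.sum_of_injective e e.injective _ _ (fun j hj => ?_) fun i => ?_).symm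
      · simp [hw'0 j hj]
      · simp [hw'e, hz'e]
  · rintro _ ⟨⟨w, z⟩, ⟨hw, hz⟩, rfl⟩
    exact (convex_convexHull ℝ K).sum_mem (fun i _ => hw.1 i) hw.2
      fun i _ => subset_convexHull ℝ K (hz i trivial)

theorem apply_linearCombination_nnreal {X : Type*} (φ : StrongDual ℝ E) (u : X → E)
    (c : X →₀ ℝ≥0) :
    φ (linearCombination ℝ≥0 u c) = ∑ x ∈ c.support, (c x : ℝ) * φ (u x) := by
  simp [linearCombination_apply, Finsupp.sum, NNReal.smul_def]

theorem support_subset_of_apply_linearCombination_eq_zero {X : Type*} {u : X → E}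
    {φ : StrongDual ℝ E} (hφ : ∀ x, 0 ≤ φ (u x)) {c : X →₀ ℝ≥0}
    (hc : φ (linearCombination ℝ≥0 u c) = 0) : ↑c.support ⊆ {x | φ (u x) = 0} := by
  intro x hx
  rw [apply_linearCombination_nnreal] at hc
  have hx0 := (Finset.sum_eq_zero_iff_of_nonneg fun x _ => mul_nonneg (c x).2 (hφ x)).1 hc x hx
  exact (mul_eq_zero.1 hx0).resolve_left (by simpa using hx)

theorem exists_sub_smul_mem_diff_interior {C : Set E} (hC : IsClosed C) {y v : E} (hy : y ∈ C)
    (ℓ : StrongDual ℝ E) (hℓC : ∀ z ∈ C, 0 ≤ ℓ z) (hℓv : 0 < ℓ v) :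
    ∃ t : ℝ, 0 ≤ t ∧ y - t • v ∈ C ∧ y - t • v ∉ interior C := by
  set W := {t : ℝ | 0 ≤ t ∧ y - t • v ∈ C}
  have hWbdd : BddAbove W := ⟨ℓ y / ℓ v, fun t ht => by
    have := hℓC _ ht.2
    rw [map_sub, map_smul, smul_eq_mul] at this
    rw [le_div_iff₀ hℓv]
    linarith⟩
  have hWclosed : IsClosed W :=
    isClosed_Ici.inter (hC.preimage (continuous_const.sub (continuous_id.smul continuous_const)))
  obtain ⟨ht₀, hC₀⟩ : (sSup W : ℝ) ∈ W := hWclosed.csSup_mem ⟨0, le_rfl, by simpa using hy⟩ hWbdd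
  refine ⟨sSup W, ht₀, hC₀, fun hint => ?_⟩
  have hev : ∀ᶠ s in 𝓝 (0 : ℝ), y - sSup W • v - s • v ∈ interior C :=
    (Continuous.tendsto (by fun_prop) 0).eventually
      (isOpen_interior.mem_nhds (by simpa using hint))
  obtain ⟨s, hs, hs0⟩ :=
    ((hev.filter_mono nhdsWithin_le_nhds).and self_mem_nhdsWithin).exists (f := 𝓝[>] 0)
  have hsW : sSup W + s ∈ W :=
    ⟨by linarith [hs0], by rw [add_smul, ← sub_sub]; exact interior_subset hs⟩
  linarith [le_csSup hWbdd hsW, hs0]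

namespace PointedCone

theorem mem_hull_range_iff {X : Type*} {u : X → E} {y : E} :
    y ∈ hull ℝ (range u) ↔ ∃ c : X →₀ ℝ≥0, linearCombination ℝ≥0 u c = y := by
  rw [hull, ← range_linearCombination, LinearMap.mem_range]
  rfl

theorem nonneg_of_mem_hull {s : Set E} {ℓ : StrongDual ℝ E} (hs : ∀ z ∈ s, 0 ≤ ℓ z) {y : E}
    (hy : y ∈ hull ℝ s) : 0 ≤ ℓ y := by
  induction hy using Submodule.span_induction with
  | mem z hz => exact hs z hz
  | zero => simp
  | add a b _ _ ha hb => rw [map_add]; positivity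
  | smul t a _ ha =>
    change 0 ≤ ℓ ((t : ℝ) • a)
    rw [map_smul, smul_eq_mul]
    exact mul_nonneg t.2 ha

theorem exists_smul_mem_convexHull_of_mem_hull {K : Set E} {ℓ : StrongDual ℝ E}
    (hℓ : ∀ k ∈ K, ℓ k = 1) {y : E} (hy : y ∈ hull ℝ K) :
    y = 0 ∨ ∃ k ∈ convexHull ℝ K, y = ℓ y • k := by
  obtain ⟨c, hcK, hc0, rfl⟩ := mem_hull_set.1 hy
  rcases c.support.eq_empty_or_nonempty with h | ⟨m, hm⟩
  · simp [Finsupp.sum, h]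
  have hℓc : ℓ (c.sum fun m r => r • m) = ∑ m ∈ c.support, c m := by
    simp only [Finsupp.sum, map_sum, map_smul, smul_eq_mul]
    exact Finset.sum_congr rfl fun m hm => by rw [hℓ m (hcK hm), mul_one]
  have hpos : 0 < ∑ m ∈ c.support, c m :=
    Finset.sum_pos' (fun m _ => hc0 m) ⟨m, hm, (hc0 m).lt_of_ne' (Finsupp.mem_support_iff.1 hm)⟩
  refine Or.inr ⟨c.support.centerMass c id,
    c.support.centerMass_mem_convexHull (fun m _ => hc0 m) hpos fun m hm => hcK hm, ?_⟩
  rw [hℓc, Finset.centerMass, smul_inv_smul₀ hpos.ne']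
  rfl

theorem isClosed_hull_of_isCompact [FiniteDimensional ℝ E] {K : Set E} (hK : IsCompact K)
    (ℓ : StrongDual ℝ E) (hℓ : ∀ k ∈ K, ℓ k = 1) : IsClosed (hull ℝ K : Set E) := by
  refine isClosed_of_closure_subset fun y hy => ?_
  -- Below the level `ℓ y + 1`, the cone lies in the compact set
  -- `{0} ∪ [0, ℓ y + 1] • convexHull ℝ K`.
  set S := insert 0 ((fun p : ℝ × E => p.1 • p.2) '' (Icc 0 (ℓ y + 1) ×ˢ convexHull ℝ K))
  have hS : IsClosed S :=
    (((isCompact_Icc.prod hK.convexHull).image (continuous_fst.smul continuous_snd)).insert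
      0).isClosed
  have hSK : S ⊆ hull ℝ K := by
    rintro _ (rfl | ⟨⟨t, k⟩, ⟨ht, hk⟩, rfl⟩)
    · exact zero_mem _
    · exact (hull ℝ K).smul_mem ht.1 (convexHull_min subset_hull (hull ℝ K).convex hk)
  have hKS : {z | ℓ z < ℓ y + 1} ∩ hull ℝ K ⊆ S := by
    rintro z ⟨hz, hzK⟩
    rcases exists_smul_mem_convexHull_of_mem_hull hℓ hzK with rfl | ⟨k, hk, hzk⟩
    · exact mem_insert _ _
    · refine mem_insert_of_mem _ ⟨(ℓ z, k), ⟨⟨?_, (show ℓ z < ℓ y + 1 from hz).le⟩, hk⟩, hzk.symm⟩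
      exact nonneg_of_mem_hull (fun k hk => (hℓ k hk).ge.trans' zero_le_one) hzK
  have hy' : y ∈ closure ({z | ℓ z < ℓ y + 1} ∩ hull ℝ K) :=
    (isOpen_lt ℓ.continuous continuous_const).inter_closure
      ⟨show ℓ y < ℓ y + 1 from lt_add_one _, hy⟩
  exact hSK (closure_minimal hKS hS hy')

theorem interior_hull_nonempty [FiniteDimensional ℝ E] {s : Set E}
    (hs : Submodule.span ℝ s = ⊤) : (interior (hull ℝ s : Set E)).Nonempty := by
  have h : affineSpan ℝ (insert 0 s) = ⊤ :=
    SetLike.coe_injective <| by rw [affineSpan_insert_zero, hs]; rfl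
  exact (interior_convexHull_nonempty_iff_affineSpan_eq_top.2 h).mono <| interior_mono <|
    convexHull_min (insert_subset (zero_mem _) subset_hull) (hull ℝ s).convex

theorem mem_hull_of_forall_nonneg {s : Set E} (hs : IsClosed (hull ℝ s : Set E)) {y : E}
    (hy : ∀ φ : StrongDual ℝ E, (∀ z ∈ s, 0 ≤ φ z) → 0 ≤ φ y) : y ∈ hull ℝ s := by
  by_contra h
  obtain ⟨φ, hφ, hφy⟩ := ProperCone.hyperplane_separation_point ⟨hull ℝ s, hs⟩ h
  exact hφy.not_ge (hy φ fun z hz => hφ z (subset_hull hz))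

theorem exists_dual_nonneg_eq_zero_of_notMem_interior (K : PointedCone ℝ E)
    (hK : (interior (K : Set E)).Nonempty) {q : E} (hq : q ∈ K) (hqK : q ∉ interior (K : Set E)) :
    ∃ φ : StrongDual ℝ E, φ ≠ 0 ∧ (∀ z ∈ K, 0 ≤ φ z) ∧ φ q = 0 := by
  obtain ⟨f, hf0, hf⟩ := geometric_hahn_banach_of_nonempty_interior_point K.convex hqK hK
  have hfq : f q = 0 := by
    have h₀ := hf 0 K.zero_mem
    have h₂ := hf (q + q) (K.add_mem hq hq)
    rw [map_zero] at h₀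
    rw [map_add] at h₂
    linarith
  exact ⟨-f, neg_ne_zero.2 hf0, fun z hz => by simpa [hfq] using hf z hz, by simp [hfq]⟩

theorem exists_linearCombination_eq_of_mem_hull [FiniteDimensional ℝ E] {X : Type*} [Nonempty X]
    {u : X → E} (hC : IsClosed (hull ℝ (range u) : Set E)) (hspan : Submodule.span ℝ (range u) = ⊤)
    (ℓ : StrongDual ℝ E) (hℓ : ∀ x, 0 < ℓ (u x)) {d : ℕ}
    (hzeros : ∀ φ : StrongDual ℝ E, (∀ x, 0 ≤ φ (u x)) → (∃ x, φ (u x) ≠ 0) →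
      {x | φ (u x) = 0}.encard ≤ d)
    {y : E} (hy : y ∈ hull ℝ (range u)) :
    ∃ c : X →₀ ℝ≥0, c.support.card ≤ d + 1 ∧ linearCombination ℝ≥0 u c = y := by
  classical
  obtain ⟨x₀⟩ := ‹Nonempty X›
  have hℓC : ∀ z ∈ hull ℝ (range u), 0 ≤ ℓ z :=
    fun z => nonneg_of_mem_hull (by rintro _ ⟨x, rfl⟩; exact (hℓ x).le)
  obtain ⟨t, ht, hq, hqi⟩ := exists_sub_smul_mem_diff_interior hC hy ℓ hℓC (hℓ x₀)
  obtain ⟨φ, hφ0, hφC, hφq⟩ :=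
    exists_dual_nonneg_eq_zero_of_notMem_interior _ (interior_hull_nonempty hspan) hq hqi
  have hφu : ∀ x, 0 ≤ φ (u x) := fun x => hφC _ (subset_hull ⟨x, rfl⟩)
  have hφne : ∃ x, φ (u x) ≠ 0 := by
    by_contra! h
    exact hφ0 (ContinuousLinearMap.coe_injective (LinearMap.ext_on_range hspan (by simpa using h)))
  obtain ⟨c, hc⟩ := mem_hull_range_iff.1 hq
  have hsupp := support_subset_of_apply_linearCombination_eq_zero hφu (hc ▸ hφq)
  refine ⟨c + Finsupp.single x₀ t.toNNReal, ?_, ?_⟩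
  · have hsub : ((c + Finsupp.single x₀ t.toNNReal).support : Set X) ⊆
        insert x₀ {x | φ (u x) = 0} := by
      intro x hx
      rcases Finset.mem_union.1 (Finsupp.support_add hx) with h | h
      · exact mem_insert_of_mem _ (hsupp h)
      · exact mem_insert_iff.2 (Or.inl (Finset.mem_singleton.1 (Finsupp.support_single_subset h)))
    have := (encard_le_encard hsub).trans ((encard_insert_le _ _).trans
      (add_le_add_left (hzeros φ hφu hφne) 1))
    rw [encard_coe_eq_coe_finsetCard] at this
    exact_mod_cast this
  · rw [map_add, hc, linearCombination_single, NNReal.smul_def, Real.coe_toNNReal t ht,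
      sub_add_cancel]

end PointedCone

end ConicHull

section Quadrature

open MeasureTheory

variable {X : Type*} [TopologicalSpace X] (V : Submodule ℝ C(X, ℝ)) [FiniteDimensional ℝ V]

noncomputable def evalCoords (x : X) : Fin (Module.finrank ℝ V) → ℝ :=
  (Module.finBasis ℝ V).dualBasis.equivFun ((ContinuousMap.evalCLM ℝ x).toLinearMap ∘ₗ V.subtype)

theorem continuous_evalCoords : Continuous (evalCoords V) := continuous_pi fun i => by
  simpa [evalCoords, Module.Basis.dualBasis_equivFun] using
    (Module.finBasis ℝ V i : C(X, ℝ)).continuous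

theorem span_range_evalCoords :
    Submodule.span ℝ (range (evalCoords V)) = ⊤ := by
  let ev : X → Module.Dual ℝ V := fun x => (ContinuousMap.evalCLM ℝ x).toLinearMap ∘ₗ V.subtype
  have hev : Submodule.span ℝ (range ev) = ⊤ := Submodule.span_eq_top_of_ne_zero fun f hf => by
    obtain ⟨x, hx⟩ := DFunLike.ne_iff.1 (Subtype.coe_ne_coe.2 hf)
    exact ⟨ev x, mem_range_self x, hx⟩
  rw [show evalCoords V = (Module.finBasis ℝ V).dualBasis.equivFun ∘ ev from rfl, range_comp,
    ← LinearEquiv.coe_coe, Submodule.span_image, hev,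
    Submodule.map_top, LinearEquiv.range]

theorem exists_mem_eq_apply_evalCoords
    (φ : StrongDual ℝ (Fin (Module.finrank ℝ V) → ℝ)) : ∃ g ∈ V, ∀ x, g x = φ (evalCoords V x) :=
  ⟨_, ((Module.evalEquiv ℝ V).symm
      (φ.toLinearMap ∘ₗ (Module.finBasis ℝ V).dualBasis.equivFun.toLinearMap)).2,
    fun x => Module.apply_evalEquiv_symm_apply ℝ V
      ((ContinuousMap.evalCLM ℝ x).toLinearMap ∘ₗ V.subtype) _⟩

theorem exists_apply_evalCoords_eq {f : C(X, ℝ)} (hf : f ∈ V) :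
    ∃ φ : StrongDual ℝ (Fin (Module.finrank ℝ V) → ℝ), ∀ x, φ (evalCoords V x) = f x :=
  ⟨LinearMap.toContinuousLinearMap (Module.Dual.eval ℝ V ⟨f, hf⟩ ∘ₗ
    (Module.finBasis ℝ V).dualBasis.equivFun.symm.toLinearMap), fun x => by
    simp only [evalCoords, LinearMap.coe_toContinuousLinearMap', LinearMap.comp_apply,
      LinearEquiv.coe_coe, LinearEquiv.symm_apply_apply]
    rfl⟩

theorem exists_nonneg_quadrature [CompactSpace X] [Nonempty X] [MeasurableSpace X]
    [OpensMeasurableSpace X] (μ : Measure X) [IsFiniteMeasure μ]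
    (hone : 1 ∈ V) {d : ℕ} (hzeros : ∀ g ∈ V, 0 ≤ g → g ≠ 0 → (⇑g ⁻¹' {0}).encard ≤ d) :
    ∃ w : X →₀ ℝ≥0, w.support.card ≤ d + 1 ∧
      ∀ f ∈ V, ∫ x, f x ∂μ = ∑ x ∈ w.support, (w x : ℝ) * f x := by
  set u := evalCoords V
  have hu := continuous_evalCoords V
  obtain ⟨ℓ, hℓ⟩ := exists_apply_evalCoords_eq V hone
  have hC := isClosed_hull_of_isCompact (isCompact_range hu) ℓ (by rintro _ ⟨x, rfl⟩; exact hℓ x)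
  have hint : Integrable u μ := (BoundedContinuousFunction.mkOfCompact ⟨u, hu⟩).integrable μ
  have hmem : ∫ x, u x ∂μ ∈ hull ℝ (range u) := mem_hull_of_forall_nonneg hC fun φ hφ => by
    rw [← φ.integral_comp_comm hint]
    exact integral_nonneg fun x => hφ _ (mem_range_self x)
  have hzeros' (φ : StrongDual ℝ (Fin (Module.finrank ℝ V) → ℝ)) (hφ : ∀ x, 0 ≤ φ (u x))
      (hne : ∃ x, φ (u x) ≠ 0) : {x | φ (u x) = 0}.encard ≤ d := by
    obtain ⟨g, hg, hgφ⟩ := exists_mem_eq_apply_evalCoords V φ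
    have hgne : g ≠ 0 := by
      rintro rfl
      obtain ⟨x, hx⟩ := hne
      exact hx (by simpa using (hgφ x).symm)
    simpa [Set.preimage, hgφ] using hzeros g hg (fun x => by simpa [hgφ] using hφ x) hgne
  obtain ⟨w, hw, hwu⟩ := exists_linearCombination_eq_of_mem_hull hC (span_range_evalCoords V) ℓ
    (fun x => by simp [hℓ]) hzeros' hmem
  refine ⟨w, hw, fun f hf => ?_⟩
  obtain ⟨φ, hφ⟩ := exists_apply_evalCoords_eq V hf
  calc ∫ x, f x ∂μ = ∫ x, φ (u x) ∂μ := by simp only [u, hφ]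
    _ = φ (∫ x, u x ∂μ) := φ.integral_comp_comm hint
    _ = _ := by rw [← hwu, apply_linearCombination_nnreal]; simp only [hφ]

end Quadrature

theorem Set.Finite.eventually_pairwise_lt_dist {α : Type*} [MetricSpace α] {Z : Set α}
    (hZ : Z.Finite) : ∀ᶠ r in 𝓝 (0 : ℝ), Z.Pairwise fun z z' => r < dist z z' := by
  have h : ∀ q ∈ Z ×ˢ Z, ∀ᶠ r in 𝓝 (0 : ℝ), q.1 ≠ q.2 → r < dist q.1 q.2 := fun q _ => by
    by_cases hq : q.1 = q.2
    · simp [hq]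
    · exact (eventually_lt_nhds (dist_pos.2 hq)).mono fun r hr _ => hr
  filter_upwards [(hZ.prod hZ).eventually_all.2 h] with r hr z hz z' hz' hne
    using hr (z, z') ⟨hz, hz'⟩ hne

namespace AddCircle

variable {p : ℝ} [Fact (0 < p)]

theorem injOn_add_coe {r : ℝ} (hr : r < p / 2) {Z : Set (AddCircle p)}
    (hZ : Z.Pairwise fun z z' => 2 * r < dist z z') :
    InjOn (fun q : AddCircle p × ℝ => q.1 + q.2) (Z ×ˢ Icc (-r) r) := by
  rintro ⟨z, s⟩ ⟨hz, hs⟩ ⟨z', s'⟩ ⟨hz', hs'⟩ h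
  simp only at h hz hs hz' hs'
  obtain rfl : z = z' := by
    by_contra hne
    refine (hZ hz hz' hne).not_ge ?_
    rw [dist_eq_norm, show z - z' = ((s' - s : ℝ) : AddCircle p) by
      rw [coe_sub, sub_eq_sub_iff_add_eq_add, h, add_comm]]
    refine QuotientAddGroup.norm_mk_le_norm.trans (abs_sub_le_iff.2 ⟨?_, ?_⟩) <;>
      linarith [hs.1, hs.2, hs'.1, hs'.2]
  have hss : (s : AddCircle p) = s' := add_left_cancel h
  rw [coe_eq_coe_iff_of_mem_Ico (a := -(p / 2)) ⟨by linarith [hs.1], by linarith [hs.2]⟩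
    ⟨by linarith [hs'.1], by linarith [hs'.2]⟩] at hss
  rw [hss]

theorem exists_pos_injOn_add_coe {Z : Set (AddCircle p)} (hZ : Z.Finite) :
    ∃ r > 0, InjOn (fun q : AddCircle p × ℝ => q.1 + q.2) (Z ×ˢ Icc (-r) r) := by
  have h2r : ∀ᶠ r in 𝓝 (0 : ℝ), Z.Pairwise fun z z' => 2 * r < dist z z' :=
    ((continuous_const.mul continuous_id).tendsto' 0 0 (mul_zero 2)).eventually
      hZ.eventually_pairwise_lt_dist
  have hp : ∀ᶠ r in 𝓝 (0 : ℝ), r < p / 2 := eventually_lt_nhds (half_pos Fact.out)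
  obtain ⟨r, ⟨hrZ, hrp⟩, hr⟩ :=
    ((h2r.and hp).filter_mono nhdsWithin_le_nhds |>.and self_mem_nhdsWithin).exists
      (f := 𝓝[>] 0)
  exact ⟨r, hr, injOn_add_coe hrp hrZ⟩

theorem two_mul_encard_zeros_le_encard_level {g : AddCircle p → ℝ} (hg : Continuous g)
    (hg0 : ∀ x, 0 ≤ g x) (hZ : (g ⁻¹' {0}).Finite) :
    ∃ ε > 0, 2 * (g ⁻¹' {0}).encard ≤ (g ⁻¹' {ε}).encard := by
  set Z := g ⁻¹' {0}
  obtain ⟨r, hr, hinj⟩ := exists_pos_injOn_add_coe hZ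
  have hside : ∀ z ∈ Z, ∀ s ∈ ({r, -r} : Set ℝ), 0 < g (z + s) := by
    intro z hz s hs
    have hsr : s ∈ Icc (-r) r := by rcases hs with rfl | rfl <;> constructor <;> linarith
    refine (hg0 _).lt_of_ne' fun h0 => ?_
    have := hinj (show (z, s) ∈ Z ×ˢ Icc (-r) r from ⟨hz, hsr⟩)
      (show (z + s, (0 : ℝ)) ∈ Z ×ˢ Icc (-r) r from
      ⟨h0, by constructor <;> linarith⟩) (by simp)
    rcases hs with rfl | rfl <;> simp_all
  obtain ⟨ε, hε, hε0⟩ : ∃ ε, (∀ z ∈ Z, ∀ s ∈ ({r, -r} : Set ℝ), ε ≤ g (z + s)) ∧ 0 < ε := by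
    have h : ∀ᶠ ε in 𝓝 (0 : ℝ), ∀ z ∈ Z, ∀ s ∈ ({r, -r} : Set ℝ), ε ≤ g (z + s) :=
      hZ.eventually_all.2 fun z hz => (toFinite _).eventually_all.2 fun s hs =>
        (eventually_lt_nhds (hside z hz s hs)).mono fun _ => le_of_lt
    exact ((h.filter_mono nhdsWithin_le_nhds).and self_mem_nhdsWithin).exists (f := 𝓝[>] 0)
  have hcont (z : AddCircle p) : Continuous fun s : ℝ => g (z + s) :=
    hg.comp (continuous_const.add (AddCircle.continuous_mk' p))
  have hright : ∀ z ∈ Z, ∃ s ∈ Ioc 0 r, g (z + s) = ε := fun z hz =>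
    intermediate_value_Ioc hr.le (hcont z).continuousOn
      ⟨by simpa [show g z = 0 from hz] using hε0, hε z hz r (by simp)⟩
  have hleft : ∀ z ∈ Z, ∃ s ∈ Ico (-r) 0, g (z + s) = ε := fun z hz =>
    intermediate_value_Ico' (neg_nonpos.2 hr.le) (hcont z).continuousOn
      ⟨by simpa [show g z = 0 from hz] using hε0, hε z hz (-r) (by simp)⟩
  choose! sR hsR hgR using hright
  choose! sL hsL hgL using hleft
  set P := (fun z => (z, sR z)) '' Z ∪ (fun z => (z, sL z)) '' Z
  have hPZ : P ⊆ Z ×ˢ Icc (-r) r := by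
    rintro _ (⟨z, hz, rfl⟩ | ⟨z, hz, rfl⟩)
    · exact ⟨hz, by linarith [(hsR z hz).1], (hsR z hz).2⟩
    · exact ⟨hz, (hsL z hz).1, by linarith [(hsL z hz).2]⟩
  have hPε : (fun q : AddCircle p × ℝ => q.1 + q.2) '' P ⊆ g ⁻¹' {ε} := by
    rintro _ ⟨_, ⟨z, hz, rfl⟩ | ⟨z, hz, rfl⟩, rfl⟩
    · exact hgR z hz
    · exact hgL z hz
  have hdisj : Disjoint ((fun z => (z, sR z)) '' Z) ((fun z => (z, sL z)) '' Z) := by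
    refine disjoint_left.2 ?_
    rintro _ ⟨z, hz, rfl⟩ ⟨z', hz', h⟩
    obtain ⟨rfl, h⟩ := Prod.ext_iff.1 h
    linarith [(hsR z' hz).1, (hsL z' hz').2]
  have hpair (s : AddCircle p → ℝ) : ((fun z => (z, s z)) '' Z).encard = Z.encard :=
    (Function.Injective.injOn fun _ _ h => congrArg Prod.fst h).encard_image
  refine ⟨ε, hε0, ?_⟩
  calc 2 * Z.encard = P.encard := by rw [encard_union_eq hdisj, hpair, hpair, two_mul]
    _ = ((fun q : AddCircle p × ℝ => q.1 + q.2) '' P).encard := ((hinj.mono hPZ).encard_image).symm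
    _ ≤ (g ⁻¹' {ε}).encard := encard_le_encard hPε

theorem encard_zeros_le_of_ncard_level_le {g : C(AddCircle p, ℝ)} (hg0 : 0 ≤ g) (hg : g ≠ 0)
    {d : ℕ} (hlevel : (¬ ∃ c : ℝ, ∀ x, g x = c) →
      ∀ b : ℝ, (g ⁻¹' {b}).Finite ∧ (g ⁻¹' {b}).ncard ≤ 2 * d) :
    (g ⁻¹' {0}).encard ≤ d := by
  by_cases hconst : ∃ c : ℝ, ∀ x, g x = c
  · obtain ⟨c, hc⟩ := hconst
    suffices g ⁻¹' {0} = ∅ by simp [this]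
    refine eq_empty_of_forall_notMem fun x hx => hg (ContinuousMap.ext fun y => ?_)
    rw [hc, ← hc x]
    exact hx
  obtain ⟨hZ, -⟩ := hlevel hconst 0
  obtain ⟨ε, -, hε⟩ := two_mul_encard_zeros_le_encard_level g.continuous hg0 hZ
  obtain ⟨hεfin, hεcard⟩ := hlevel hconst ε
  rw [← hZ.cast_ncard_eq, ← hεfin.cast_ncard_eq] at hε
  rw [← hZ.cast_ncard_eq]
  norm_cast at hε ⊢
  omega

theorem exists_Icc_of_card_le {s : Finset (AddCircle p)} {d : ℕ} (hs : s.card ≤ d + 1) :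
    ∃ c : ℝ, ∀ x ∈ s, ∃ t ∈ Icc c (c + d / (d + 1) * p), (t : AddCircle p) = x := by
  rcases s.eq_empty_or_nonempty with rfl | ⟨x₀, hx₀⟩
  · simp
  obtain ⟨a, rfl⟩ := QuotientAddGroup.mk_surjective x₀
  set δ := p / (d + 1)
  have hδ : 0 < δ := div_pos Fact.out (by positivity)
  have hpδ : p = (d + 1) * δ := by simp only [δ]; field_simp
  have hdδ : (d : ℝ) / (d + 1) * p = d * δ := by simp only [δ]; field_simp
  let r : AddCircle p → ℝ := fun x => equivIco p 0 (x - a)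
  have hr (x : AddCircle p) : r x ∈ Ico 0 p := by simpa using (equivIco p 0 (x - a)).2
  have hra (x : AddCircle p) : ((a + r x : ℝ) : AddCircle p) = x := by
    simp [r]
  -- some window `(m δ, (m + 1) δ)` of the circle, measured from `a`, contains no point of `s`
  obtain ⟨m, hm, hms⟩ := Finset.exists_mem_notMem_of_card_lt_card
    (s := (s.erase a).image fun x => ⌊r x / δ⌋₊) (t := Finset.range (d + 1))
    (by rw [Finset.card_range]; exact Finset.card_image_le.trans_lt (by
      rw [Finset.card_erase_of_mem hx₀]; omega))
  have hm' : (m : ℝ) ≤ d := by exact_mod_cast Nat.lt_succ_iff.1 (Finset.mem_range.1 hm)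
  have hgap : ∀ x ∈ s, r x ≤ m * δ ∨ (m + 1) * δ ≤ r x := by
    intro x hx
    by_cases hxa : x = a
    · left
      have hra0 : r a = 0 := by
        have h := hra a
        rw [coe_add, add_eq_left, ← coe_zero] at h
        exact (coe_eq_coe_iff_of_mem_Ico (a := 0) (by simpa using hr a)
          (by simpa using (Fact.out : 0 < p))).1 h
      rw [hxa, hra0]
      positivity
    by_contra! h
    refine hms (Finset.mem_image.2 ⟨x, Finset.mem_erase.2 ⟨hxa, hx⟩, ?_⟩)
    rw [Nat.floor_eq_iff (div_nonneg (hr x).1 hδ.le), le_div_iff₀ hδ, div_lt_iff₀ hδ]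
    exact ⟨h.1.le, h.2⟩
  refine ⟨a + (m + 1) * δ, fun x hx => ?_⟩
  rw [hdδ]
  rcases hgap x hx with h | h
  · refine ⟨a + r x + p, ⟨?_, ?_⟩, by rw [coe_add_period, hra]⟩ <;> nlinarith [(hr x).1]
  · refine ⟨a + r x, ⟨?_, ?_⟩, hra x⟩ <;> nlinarith [(hr x).2]

end AddCircle

theorem Finset.exists_nonpos_of_sum_mul_eq_zero {ι : Type*} {s : Finset ι} {w f : ι → ℝ}
    (hw : ∀ i ∈ s, 0 < w i) (hs : s.Nonempty) (h : ∑ i ∈ s, w i * f i = 0) :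
    ∃ i ∈ s, f i ≤ 0 := by
  by_contra! hf
  exact (Finset.sum_pos (fun i hi => mul_pos (hw i hi) (hf i hi)) hs).ne' h

open MeasureTheory in
/-- Babenko's theorem for Chebyshev spaces: if `V ⊆ C(S¹, ℝ)` is a
`(2d+1)`-dimensional Chebyshev space, then there is a closed arc of length
`d/(d+1)` on which every zero-mean `f ∈ V` has a zero. -/
theorem babenko_chebyshev (d : ℕ) (V : Submodule ℝ C(AddCircle (1:ℝ), ℝ))
    (hdim : Module.finrank ℝ V = 2 * d + 1)
    (hconst : ∀ c : ℝ, (ContinuousMap.const (AddCircle (1:ℝ)) c) ∈ V)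
    (hcheb : ∀ f : C(AddCircle (1:ℝ), ℝ), f ∈ V → (¬ ∃ c : ℝ, ∀ x, f x = c) →
      ∀ b : ℝ, (f ⁻¹' {b} : Set (AddCircle (1:ℝ))).Finite ∧
        (f ⁻¹' {b} : Set (AddCircle (1:ℝ))).ncard ≤ 2 * d) :
    ∃ c : ℝ, ∀ f : C(AddCircle (1:ℝ), ℝ), f ∈ V → (∫ x, f x = 0) →
      ∃ t ∈ Set.Icc c (c + (d:ℝ)/(d+1)), f ((t : ℝ) : AddCircle (1:ℝ)) = 0 := by
  have : FiniteDimensional ℝ V := FiniteDimensional.of_finrank_eq_succ hdim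
  obtain ⟨w, hw, hquad⟩ := exists_nonneg_quadrature V volume (hconst 1) fun g hg hg0 hg_ne =>
    AddCircle.encard_zeros_le_of_ncard_level_le hg0 hg_ne (hcheb g hg)
  obtain ⟨c, hc⟩ := AddCircle.exists_Icc_of_card_le hw
  simp only [mul_one] at hc
  refine ⟨c, fun f hf hmean => ?_⟩
  have hpos : ∀ x ∈ w.support, 0 < (w x : ℝ) := fun x hx => by
    simpa [pos_iff_ne_zero] using hx
  have hne : w.support.Nonempty := by
    by_contra! h
    simpa [h, Measure.real, AddCircle.measure_univ] using hquad 1 (hconst 1)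
  have h0 : ∑ x ∈ w.support, (w x : ℝ) * f x = 0 := (hquad f hf).symm.trans hmean
  obtain ⟨x, hx, hfx⟩ := Finset.exists_nonpos_of_sum_mul_eq_zero hpos hne h0
  obtain ⟨y, hy, hfy⟩ := Finset.exists_nonpos_of_sum_mul_eq_zero (f := fun x => -f x) hpos hne
    (by simp [h0])
  obtain ⟨tx, htx, rfl⟩ := hc x hx
  obtain ⟨ty, hty, rfl⟩ := hc y hy
  exact isPreconnected_Icc.intermediate_value htx hty
    (f.continuous.comp (AddCircle.continuous_mk' 1)).continuousOn ⟨hfx, neg_nonpos.1 hfy⟩
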